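/- Let G be a finite graph with loops at all vertices and let H = G - uv be obtained by deleting edge uv. Suppose f is an optimal opinion function for G (strictly majoritarian with f(V) = γ(G)) and f(u) = f(v) = -1. Then 0 ≤ γ(G) - γ(H) ≤ 2; in particular γ(H) ≤ γ(G). -/

import Mathlib

/-!
Deleting `uv` removes exactly `f v` from the neighbourhood sum of `u` and `f u` from that of `v`.
As `f u = f v = -1`, no vote is lost, so `f` stays strictly majoritarian on `H` and
`γ(H) ≤ γ(G)`. Conversely, take an optimal `g` for `H`: if `g` is `1` at both ends of `uv`,
re-inserting the edge loses no vote; otherwise flipping an endpoint with opinion `-1` to `1`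
makes `g` strictly majoritarian on `G` at a cost of `2`, so `γ(G) ≤ γ(H) + 2`.
-/

open scoped Classical
open Finset

/-- Sum of opinions over the closed neighborhood of `v` (closed since every
vertex has a loop, so `v` itself is counted). -/
noncomputable def nbrSum {V : Type*} [Fintype V] (G : SimpleGraph V) (f : V → ℤ) (v : V) : ℤ :=
  ∑ w ∈ univ.filter (fun w => G.Adj v w ∨ w = v), f w

/-- `f` is an opinion function: every value is `1` or `-1`. -/
def IsOpinion {V : Type*} (f : V → ℤ) : Prop := ∀ v, f v = 1 ∨ f v = -1

/-- The set of vertices voting 'yes'. -/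
noncomputable def yesVoters {V : Type*} [Fintype V] (G : SimpleGraph V) (f : V → ℤ) : Finset V :=
  univ.filter (fun v => 0 < nbrSum G f v)

/-- `f` is strictly majoritarian on `G`: more than `|V|/2` vertices vote 'yes'. -/
def Majoritarian {V : Type*} [Fintype V] (G : SimpleGraph V) (f : V → ℤ) : Prop :=
  Fintype.card V < 2 * (yesVoters G f).card

/-- The strict domination number: minimum of `f(V)` over strictly majoritarian
opinion functions. -/
noncomputable def gamma {V : Type*} [Fintype V] (G : SimpleGraph V) : ℤ :=
  sInf {t : ℤ | ∃ f : V → ℤ, IsOpinion f ∧ Majoritarian G f ∧ t = ∑ v, f v}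

theorem Finset.sum_update_of_mem_eq_sub_add {ι M : Type*} [AddCommGroup M] [DecidableEq ι]
    {s : Finset ι} {i : ι} (h : i ∈ s) (f : ι → M) (b : M) :
    ∑ x ∈ s, Function.update f i b x = ∑ x ∈ s, f x - f i + b := by
  rw [sum_update_of_mem h, sum_eq_add_sum_sdiff_singleton_of_mem h]
  abel

lemma IsOpinion.update_one {V : Type*} [DecidableEq V] {f : V → ℤ} (hf : IsOpinion f) (u : V) :
    IsOpinion (Function.update f u 1) := by
  intro x
  rcases eq_or_ne x u with rfl | hx
  · simp
  · simpa [Function.update_of_ne hx] using hf x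

lemma IsOpinion.neg_one_le {V : Type*} {f : V → ℤ} (hf : IsOpinion f) (x : V) : -1 ≤ f x := by
  rcases hf x with h | h <;> norm_num [h]

section Voting

variable {V : Type*} [Fintype V]

lemma nbrSum_mono (G : SimpleGraph V) {f g : V → ℤ} (h : f ≤ g) (w : V) :
    nbrSum G f w ≤ nbrSum G g w :=
  sum_le_sum fun x _ => h x

lemma nbrSum_update_self (G : SimpleGraph V) (f : V → ℤ) (w : V) (a : ℤ) :
    nbrSum G (Function.update f w a) w = nbrSum G f w - f w + a :=
  sum_update_of_mem_eq_sub_add (by simp) f a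

lemma nbrSum_eq_nbrSum_deleteEdges_add (G : SimpleGraph V) (s : Set (Sym2 V)) (f : V → ℤ)
    (w : V) :
    nbrSum G f w = nbrSum (G.deleteEdges s) f w +
      ∑ x ∈ univ.filter (fun x => G.Adj w x ∧ s(w, x) ∈ s), f x := by
  simp only [nbrSum, sum_filter, ← sum_add_distrib, SimpleGraph.deleteEdges_adj]
  refine sum_congr rfl fun x _ => ?_
  have : G.Adj w x → x ≠ w := fun h => (G.ne_of_adj h).symm
  split_ifs <;> grind

lemma nbrSum_le_nbrSum_deleteEdges (G : SimpleGraph V) {s : Set (Sym2 V)} {f : V → ℤ}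
    (hs : ∀ e ∈ s, ∀ x ∈ e, f x ≤ 0) (w : V) :
    nbrSum G f w ≤ nbrSum (G.deleteEdges s) f w := by
  rw [nbrSum_eq_nbrSum_deleteEdges_add G s]
  have hlost : ∑ x ∈ univ.filter (fun x => G.Adj w x ∧ s(w, x) ∈ s), f x ≤ 0 :=
    sum_nonpos fun x hx => hs _ (mem_filter.1 hx).2.2 x (Sym2.mem_mk_right w x)
  linarith

lemma nbrSum_deleteEdges_le_nbrSum (G : SimpleGraph V) {s : Set (Sym2 V)} {f : V → ℤ}
    (hs : ∀ e ∈ s, ∀ x ∈ e, 0 ≤ f x) (w : V) :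
    nbrSum (G.deleteEdges s) f w ≤ nbrSum G f w := by
  rw [nbrSum_eq_nbrSum_deleteEdges_add G s]
  have hlost : 0 ≤ ∑ x ∈ univ.filter (fun x => G.Adj w x ∧ s(w, x) ∈ s), f x :=
    sum_nonneg fun x hx => hs _ (mem_filter.1 hx).2.2 x (Sym2.mem_mk_right w x)
  linarith

lemma Majoritarian.of_nbrSum_le {G₁ G₂ : SimpleGraph V} {f g : V → ℤ}
    (h : ∀ w, nbrSum G₁ f w ≤ nbrSum G₂ g w) (hm : Majoritarian G₁ f) : Majoritarian G₂ g := by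
  have hyes : yesVoters G₁ f ⊆ yesVoters G₂ g := by
    intro w hw
    simp only [yesVoters, mem_filter, mem_univ, true_and] at hw ⊢
    exact hw.trans_le (h w)
  exact hm.trans_le (Nat.mul_le_mul_left 2 (card_le_card hyes))

lemma Majoritarian.deleteEdges {G : SimpleGraph V} {s : Set (Sym2 V)} {f : V → ℤ}
    (hs : ∀ e ∈ s, ∀ x ∈ e, f x ≤ 0) (hm : Majoritarian G f) :
    Majoritarian (G.deleteEdges s) f :=
  hm.of_nbrSum_le (nbrSum_le_nbrSum_deleteEdges G hs)

/-- Re-inserting the edge `uv` costs `u` at most one vote, which flipping `u` from `-1` to `1`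
more than pays for; `v` gains the vote of `u`. -/
lemma nbrSum_deleteEdges_le_nbrSum_update {G : SimpleGraph V} {u v : V} (hadj : G.Adj u v)
    {g : V → ℤ} (hg : IsOpinion g) (hgu : g u = -1) (w : V) :
    nbrSum (G.deleteEdges {s(u, v)}) g w ≤ nbrSum G (Function.update g u 1) w := by
  set g' := Function.update g u 1
  have hle : g ≤ g' := by
    intro x
    rcases eq_or_ne x u with rfl | hx
    · simp [g', hgu]
    · simp [g', Function.update_of_ne hx]
  rw [nbrSum_eq_nbrSum_deleteEdges_add G {s(u, v)}]
  rcases eq_or_ne w u with rfl | hwu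
  · rw [sum_eq_single_of_mem v (by simpa using hadj) (fun x hx hxv => by simp_all),
      nbrSum_update_self, hgu]
    linarith [(hg.update_one w).neg_one_le v]
  · refine le_add_of_le_of_nonneg (nbrSum_mono _ hle w) (sum_nonneg fun x hx => ?_)
    have hxu : x = u := by
      simp only [mem_filter, Set.mem_singleton_iff, Sym2.eq_iff] at hx
      tauto
    simp [g', hxu]

lemma majoritarian_update_of_deleteEdges {G : SimpleGraph V} {u v : V} (hadj : G.Adj u v)
    {g : V → ℤ} (hg : IsOpinion g) (hgu : g u = -1)
    (hm : Majoritarian (G.deleteEdges {s(u, v)}) g) :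
    Majoritarian G (Function.update g u 1) :=
  hm.of_nbrSum_le (nbrSum_deleteEdges_le_nbrSum_update hadj hg hgu)

lemma exists_majoritarian_sum_le_add_two {G : SimpleGraph V} {u v : V} (hadj : G.Adj u v)
    {g : V → ℤ} (hg : IsOpinion g) (hm : Majoritarian (G.deleteEdges {s(u, v)}) g) :
    ∃ g' : V → ℤ, IsOpinion g' ∧ Majoritarian G g' ∧ ∑ x, g' x ≤ ∑ x, g x + 2 := by
  have hflip : ∀ a, g a = -1 → ∑ x, Function.update g a 1 x = ∑ x, g x + 2 := fun a ha => by
    rw [sum_update_of_mem_eq_sub_add (mem_univ a), ha]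
    ring
  rcases hg u with hgu | hgu
  · rcases hg v with hgv | hgv
    · refine ⟨g, hg, hm.of_nbrSum_le (nbrSum_deleteEdges_le_nbrSum G ?_), by linarith⟩
      simp [hgu, hgv]
    · rw [Sym2.eq_swap] at hm
      exact ⟨_, hg.update_one v, majoritarian_update_of_deleteEdges hadj.symm hg hgv hm,
        (hflip v hgv).le⟩
  · exact ⟨_, hg.update_one u, majoritarian_update_of_deleteEdges hadj hg hgu hm,
      (hflip u hgu).le⟩

lemma bddBelow_gamma_set (G : SimpleGraph V) :
    BddBelow {t : ℤ | ∃ f : V → ℤ, IsOpinion f ∧ Majoritarian G f ∧ t = ∑ v, f v} := by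
  refine ⟨-Fintype.card V, ?_⟩
  rintro t ⟨f, hf, -, rfl⟩
  simpa using sum_le_sum fun x (_ : x ∈ univ) => hf.neg_one_le x

lemma gamma_le_sum {G : SimpleGraph V} {f : V → ℤ} (hf : IsOpinion f) (hm : Majoritarian G f) :
    gamma G ≤ ∑ x, f x :=
  csInf_le (bddBelow_gamma_set G) ⟨f, hf, hm, rfl⟩

lemma exists_sum_eq_gamma {G : SimpleGraph V} {f : V → ℤ} (hf : IsOpinion f)
    (hm : Majoritarian G f) :
    ∃ g : V → ℤ, IsOpinion g ∧ Majoritarian G g ∧ gamma G = ∑ x, g x :=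
  Int.csInf_mem (s := {t | ∃ g : V → ℤ, IsOpinion g ∧ Majoritarian G g ∧ t = ∑ x, g x})
    ⟨_, f, hf, hm, rfl⟩ (bddBelow_gamma_set G)

lemma gamma_le_gamma_deleteEdges_add_two {G : SimpleGraph V} {u v : V} (hadj : G.Adj u v)
    {f : V → ℤ} (hf : IsOpinion f) (hm : Majoritarian (G.deleteEdges {s(u, v)}) f) :
    gamma G ≤ gamma (G.deleteEdges {s(u, v)}) + 2 := by
  obtain ⟨g, hg, hgm, hgamma⟩ := exists_sum_eq_gamma hf hm
  obtain ⟨g', hg', hg'm, hsum⟩ := exists_majoritarian_sum_le_add_two hadj hg hgm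
  linarith [gamma_le_sum hg' hg'm]

end Voting

theorem stmt2_general {V : Type*} [Fintype V] (G : SimpleGraph V) (u v : V) (f : V → ℤ)
    (hadj : G.Adj u v)
    (hf : IsOpinion f) (hmaj : Majoritarian G f) (hopt : ∑ w, f w = gamma G)
    (hu : f u = -1) (hv : f v = -1) :
    0 ≤ gamma G - gamma (G.deleteEdges {s(u, v)}) ∧
      gamma G - gamma (G.deleteEdges {s(u, v)}) ≤ 2 ∧
      gamma (G.deleteEdges {s(u, v)}) ≤ gamma G := by
  have hmH : Majoritarian (G.deleteEdges {s(u, v)}) f :=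
    hmaj.deleteEdges (by simp [hu, hv])
  have hle : gamma (G.deleteEdges {s(u, v)}) ≤ gamma G := hopt ▸ gamma_le_sum hf hmH
  have hge := gamma_le_gamma_deleteEdges_add_two hadj hf hmH
  omega

theorem stmt2 {V : Type*} [Fintype V] [Nonempty V] (G : SimpleGraph V) (u v : V) (f : V → ℤ)
    (huv : u ≠ v) (hadj : G.Adj u v)
    (hf : IsOpinion f) (hmaj : Majoritarian G f) (hopt : ∑ w, f w = gamma G)
    (hu : f u = -1) (hv : f v = -1) :
    0 ≤ gamma G - gamma (G.deleteEdges {s(u, v)}) ∧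
      gamma G - gamma (G.deleteEdges {s(u, v)}) ≤ 2 ∧
      gamma (G.deleteEdges {s(u, v)}) ≤ gamma G :=
  stmt2_general G u v f hadj hf hmaj hopt hu hv
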